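/- The functions u(x,y,t) = -ax/3 - x²/(9t) + Mx·t^{-2/3} + N·t^{-1/3} + (3C'/A)·y·t^{-2/3} and v(x,y,t) = -y/(18ct) + R·t^{-2/3} - b/(6c) satisfy the eBLMP equation u_ty - a·u_xy - b·u_yy + u_xxxy + c(u_yyyy - 6v·u_yy) - 3(u_y·u_xx + u_x·u_xy) = 0 for all t > 0. -/
import Mathlib


noncomputable section

def px (f : ℝ → ℝ → ℝ → ℝ) : ℝ → ℝ → ℝ → ℝ := fun x y t => deriv (fun x' => f x' y t) x
def py (f : ℝ → ℝ → ℝ → ℝ) : ℝ → ℝ → ℝ → ℝ := fun x y t => deriv (fun y' => f x y' t) y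
def pt (f : ℝ → ℝ → ℝ → ℝ) : ℝ → ℝ → ℝ → ℝ := fun x y t => deriv (fun t' => f x y t') t

theorem stmt_2 (a b c M N C' A R : ℝ) (hc : c ≠ 0) (hA : A ≠ 0)
    (u v : ℝ → ℝ → ℝ → ℝ)
    (hu : u = fun x y t => -a * x / 3 - x ^ 2 / (9 * t) + M * x * t ^ ((-2 : ℝ) / 3)
      + N * t ^ ((-1 : ℝ) / 3) + (3 * C' / A) * y * t ^ ((-2 : ℝ) / 3))
    (hv : v = fun x y t => -y / (18 * c * t) + R * t ^ ((-2 : ℝ) / 3) - b / (6 * c)) :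
    ∀ x y : ℝ, ∀ t : ℝ, 0 < t →
      py (pt u) x y t - a * py (px u) x y t - b * py (py u) x y t
        + py (px (px (px u))) x y t
        + c * (py (py (py (py u))) x y t - 6 * v x y t * py (py u) x y t)
        - 3 * (py u x y t * px (px u) x y t + px u x y t * py (px u) x y t) = 0 := by
  intro x y t ht
  have ht' : t ≠ 0 := ne_of_gt ht
  have hu' : ∀ x₁ y₁ t₁ : ℝ, u x₁ y₁ t₁ = -a * x₁ / 3 - x₁ ^ 2 / 9 * t₁⁻¹
      + M * x₁ * t₁ ^ ((-2 : ℝ) / 3) + N * t₁ ^ ((-1 : ℝ) / 3)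
      + 3 * C' / A * y₁ * t₁ ^ ((-2 : ℝ) / 3) := by
    intro x₁ y₁ t₁; simp only [hu]; ring
  have hrp : ∀ q : ℝ, HasDerivAt (fun t' : ℝ => t' ^ q) (q * t ^ (q - 1)) t :=
    fun q => Real.hasDerivAt_rpow_const (Or.inl ht')
  -- first order x derivative
  have hpxu : ∀ x' y' : ℝ, px u x' y' t
      = -a / 3 - 2 * x' / 9 * t⁻¹ + M * t ^ ((-2 : ℝ) / 3) := by
    intro x' y'
    show deriv (fun x'' => u x'' y' t) x' = _
    simp only [hu']
    have h := (((((((hasDerivAt_id x').const_mul (-a)).div_const 3).sub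
      (((hasDerivAt_pow 2 x').div_const 9).mul_const t⁻¹)).add
      (((hasDerivAt_id x').const_mul M).mul_const (t ^ ((-2 : ℝ) / 3)))).add
      (hasDerivAt_const x' (N * t ^ ((-1 : ℝ) / 3)))).add
      (hasDerivAt_const x' (3 * C' / A * y' * t ^ ((-2 : ℝ) / 3))))
    exact h.deriv.trans (by push_cast; ring)
  -- first order y derivative
  have hpyu : ∀ x' y' : ℝ, py u x' y' t = 3 * C' / A * t ^ ((-2 : ℝ) / 3) := by
    intro x' y'
    show deriv (fun y'' => u x' y'' t) y' = _
    simp only [hu']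
    have h := (((((hasDerivAt_const y' (-a * x' / 3)).sub
      (hasDerivAt_const y' (x' ^ 2 / 9 * t⁻¹))).add
      (hasDerivAt_const y' (M * x' * t ^ ((-2 : ℝ) / 3)))).add
      (hasDerivAt_const y' (N * t ^ ((-1 : ℝ) / 3)))).add
      (((hasDerivAt_id y').const_mul (3 * C' / A)).mul_const (t ^ ((-2 : ℝ) / 3))))
    exact h.deriv.trans (by ring)
  -- t derivative
  have hptu : ∀ y' : ℝ, pt u x y' t
      = x ^ 2 / 9 * (t ^ 2)⁻¹ + M * x * ((-2 : ℝ) / 3) * t ^ ((-2 : ℝ) / 3 - 1)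
        + N * ((-1 : ℝ) / 3) * t ^ ((-1 : ℝ) / 3 - 1)
        + 3 * C' / A * ((-2 : ℝ) / 3) * t ^ ((-2 : ℝ) / 3 - 1) * y' := by
    intro y'
    show deriv (fun t' => u x y' t') t = _
    simp only [hu']
    have h := (((((hasDerivAt_const t (-a * x / 3)).sub
      ((hasDerivAt_inv ht').const_mul (x ^ 2 / 9))).add
      ((hrp ((-2 : ℝ) / 3)).const_mul (M * x))).add
      ((hrp ((-1 : ℝ) / 3)).const_mul N)).add
      ((hrp ((-2 : ℝ) / 3)).const_mul (3 * C' / A * y')))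
    exact h.deriv.trans (by ring)
  -- second order derivatives
  have hpxxu : ∀ x' y' : ℝ, px (px u) x' y' t = -(2 / 9 * t⁻¹) := by
    intro x' y'
    show deriv (fun x'' => px u x'' y' t) x' = _
    simp only [hpxu]
    have h := (((hasDerivAt_const x' (-a / 3)).sub
      ((((hasDerivAt_id x').const_mul 2).div_const 9).mul_const t⁻¹)).add
      (hasDerivAt_const x' (M * t ^ ((-2 : ℝ) / 3))))
    exact h.deriv.trans (by ring)
  have hpypxu : ∀ x' y' : ℝ, py (px u) x' y' t = 0 := by
    intro x' y'
    show deriv (fun y'' => px u x' y'' t) y' = _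
    simp only [hpxu]
    exact deriv_const _ _
  have hpyyu : ∀ x' y' : ℝ, py (py u) x' y' t = 0 := by
    intro x' y'
    show deriv (fun y'' => py u x' y'' t) y' = _
    simp only [hpyu]
    exact deriv_const _ _
  have hpyyyu : ∀ x' y' : ℝ, py (py (py u)) x' y' t = 0 := by
    intro x' y'
    show deriv (fun y'' => py (py u) x' y'' t) y' = _
    simp only [hpyyu]
    exact deriv_const _ _
  have hpy4u : py (py (py (py u))) x y t = 0 := by
    show deriv (fun y'' => py (py (py u)) x y'' t) y = _
    simp only [hpyyyu]
    exact deriv_const _ _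
  have hpxxxu : ∀ x' y' : ℝ, px (px (px u)) x' y' t = 0 := by
    intro x' y'
    show deriv (fun x'' => px (px u) x'' y' t) x' = _
    simp only [hpxxu]
    exact deriv_const _ _
  have hpypxxxu : py (px (px (px u))) x y t = 0 := by
    show deriv (fun y'' => px (px (px u)) x y'' t) y = _
    simp only [hpxxxu]
    exact deriv_const _ _
  have hptyu : py (pt u) x y t = 3 * C' / A * ((-2 : ℝ) / 3) * t ^ ((-2 : ℝ) / 3 - 1) := by
    show deriv (fun y'' => pt u x y'' t) y = _
    simp only [hptu]
    have h := (((hasDerivAt_const y (x ^ 2 / 9 * (t ^ 2)⁻¹)).add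
      (hasDerivAt_const y (M * x * ((-2 : ℝ) / 3) * t ^ ((-2 : ℝ) / 3 - 1)))).add
      (hasDerivAt_const y (N * ((-1 : ℝ) / 3) * t ^ ((-1 : ℝ) / 3 - 1)))).add
      ((hasDerivAt_id y).const_mul (3 * C' / A * ((-2 : ℝ) / 3) * t ^ ((-2 : ℝ) / 3 - 1)))
    exact h.deriv.trans (by ring)
  rw [hptyu, hpypxu, hpyyu, hpy4u, hpypxxxu, hpyu, hpxxu, hpxu]
  have hkey : t ^ ((-2 : ℝ) / 3 - 1) = t ^ ((-2 : ℝ) / 3) * t⁻¹ := by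
    rw [Real.rpow_sub ht, Real.rpow_one, div_eq_mul_inv]
  rw [hkey]
  ring
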